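/- arXiv:2410.05929 — 4 statements merged into one kernel-verified Lean document; each statement's English description precedes it below -/
import Mathlib

section
/- Let g : {z ∈ ℂ : |z| ≤ 1} → ℂ be continuous, complex-differentiable at every point of the open unit disc {|z| < 1}, and such that the boundary function θ ↦ g(e^{iθ}) is infinitely differentiable on ℝ. Then g is infinitely differentiable on the closed unit disc in the real sense (ContDiffOn ℝ ⊤ on {|z| ≤ 1}, viewing ℂ as ℝ²). -/
open Set Complex Metric intervalIntegral Filter MeasureTheory Topology

private lemma parts_step {h : ℝ → ℂ} (hsm : ContDiff ℝ (⊤ : ℕ∞) h)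
    (hper : Function.Periodic h (2 * Real.pi)) {n : ℕ} (hn : 1 ≤ n) (k : ℕ) :
    ∫ θ in (0:ℝ)..2 * Real.pi, Complex.exp (-(n:ℂ) * θ * I) * iteratedDeriv k h θ
      = ((n:ℂ) * I)⁻¹ * ∫ θ in (0:ℝ)..2 * Real.pi,
          Complex.exp (-(n:ℂ) * θ * I) * iteratedDeriv (k + 1) h θ := by
  set m : ℂ := (n:ℂ) * I with hm
  have hm0 : m ≠ 0 := by
    simp [hm, Complex.I_ne_zero]
    omega
  set u : ℝ → ℂ := iteratedDeriv k h with hu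
  set u' : ℝ → ℂ := iteratedDeriv (k + 1) h with hu'
  set v : ℝ → ℂ := fun θ => -(m⁻¹) * Complex.exp (-(n:ℂ) * θ * I) with hv
  set v' : ℝ → ℂ := fun θ => Complex.exp (-(n:ℂ) * θ * I) with hv'
  have hdu : ∀ x ∈ uIcc (0:ℝ) (2 * Real.pi), HasDerivAt u (u' x) x := by
    intro x _
    have hd : Differentiable ℝ u :=
      hsm.differentiable_iteratedDeriv k (by exact_mod_cast ENat.coe_lt_top k)
    have := (hd x).hasDerivAt
    rwa [hu', iteratedDeriv_succ]
  have hdv : ∀ x ∈ uIcc (0:ℝ) (2 * Real.pi), HasDerivAt v (v' x) x := by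
    intro x _
    have hlin : HasDerivAt (fun z : ℂ => -(n:ℂ) * z * I) (-(n:ℂ) * I) (x:ℂ) := by
      simpa using ((hasDerivAt_id (x:ℂ)).const_mul (-(n:ℂ))).mul_const I
    have hexp := hlin.cexp
    have hexpR := hexp.comp_ofReal
    have hder := hexpR.const_mul (-(m⁻¹))
    have hm0' : (n:ℂ) * I ≠ 0 := by rw [← hm]; exact hm0
    have hval : -(m⁻¹) * (Complex.exp (-(n:ℂ) * (x:ℂ) * I) * (-(n:ℂ) * I)) = v' x := by
      simp only [hv', hm]
      field_simp
      exact div_self (Nat.cast_ne_zero.mpr (by omega))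
    exact hval ▸ hder
  have hiu' : IntervalIntegrable u' MeasureTheory.volume 0 (2 * Real.pi) :=
    (hsm.continuous_iteratedDeriv (k+1) (by exact_mod_cast le_top)).intervalIntegrable _ _
  have hcv' : Continuous v' := by
    apply Complex.continuous_exp.comp
    continuity
  have hiv' : IntervalIntegrable v' MeasureTheory.volume 0 (2 * Real.pi) :=
    hcv'.intervalIntegrable _ _
  have hparts := intervalIntegral.integral_mul_deriv_eq_deriv_mul hdu hdv hiu' hiv'
  have hub : u (2 * Real.pi) = u 0 := by
    have hfun : (fun z => h (z + 2 * Real.pi)) = h := funext fun x => hper x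
    have hcomp := iteratedDeriv_comp_add_const k h (2 * Real.pi)
    rw [hfun] at hcomp
    calc u (2 * Real.pi) = iteratedDeriv k h (0 + 2 * Real.pi) := by rw [hu]; norm_num
      _ = u 0 := by rw [hu]; exact (congrFun hcomp 0).symm
  have hvb : v (2 * Real.pi) = v 0 := by
    rw [hv]
    simp only
    congr 1
    rw [show -(n:ℂ) * ((2:ℝ) * Real.pi : ℝ) * I = ((-(n:ℤ) : ℤ) : ℂ) * (2 * Real.pi * I) by
      push_cast; ring]
    rw [Complex.exp_int_mul_two_pi_mul_I]
    norm_num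
  calc ∫ θ in (0:ℝ)..2 * Real.pi, Complex.exp (-(n:ℂ) * θ * I) * u θ
      = ∫ θ in (0:ℝ)..2 * Real.pi, u θ * v' θ := by
        refine intervalIntegral.integral_congr fun θ _ => ?_
        rw [hv']
        ring
    _ = u (2*Real.pi) * v (2*Real.pi) - u 0 * v 0 - ∫ θ in (0:ℝ)..2 * Real.pi, u' θ * v θ :=
        hparts
    _ = - ∫ θ in (0:ℝ)..2 * Real.pi, u' θ * v θ := by
        rw [hub, hvb]; ring
    _ = m⁻¹ * ∫ θ in (0:ℝ)..2 * Real.pi, Complex.exp (-(n:ℂ) * θ * I) * u' θ := by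
        rw [← intervalIntegral.integral_const_mul, ← intervalIntegral.integral_neg]
        refine intervalIntegral.integral_congr fun θ _ => ?_
        rw [hv]
        simp only
        ring


private lemma cauchy_coeff_formula (g : ℂ → ℂ) {R : ℝ} (hR : 0 < R) (n : ℕ) :
    (cauchyPowerSeries g 0 R).coeff n * (R:ℂ)^n = (2 * (Real.pi:ℂ))⁻¹ *
      ∫ θ in (0:ℝ)..2*Real.pi,
        Complex.exp (-(n:ℂ) * θ * I) * g ((R:ℂ) * Complex.exp (θ * I)) := by
  have hcoeff : (cauchyPowerSeries g 0 R).coeff n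
      = (2 * (Real.pi:ℂ) * I)⁻¹ • ∮ z in C(0, R), (1 / (z - 0)) ^ n • (z - 0)⁻¹ • g z := by
    show cauchyPowerSeries g 0 R n (fun _ => 1) = _
    rw [cauchyPowerSeries_apply]
  rw [hcoeff]
  rw [circleIntegral]
  simp only [smul_eq_mul, deriv_circleMap, circleMap_zero]
  rw [show ((2:ℂ) * (Real.pi:ℂ) * I)⁻¹ * (∫ θ in (0:ℝ)..2*Real.pi,
      (R:ℂ) * Complex.exp (θ * I) * I *
        ((1 / ((R:ℂ) * Complex.exp (θ * I) - 0)) ^ n *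
          (((R:ℂ) * Complex.exp (θ * I) - 0)⁻¹ * g ((R:ℂ) * Complex.exp (θ * I))))) * (R:ℂ)^n
    = (2 * (Real.pi:ℂ) * I)⁻¹ * ∫ θ in (0:ℝ)..2*Real.pi,
      ((R:ℂ) * Complex.exp (θ * I) * I *
        ((1 / ((R:ℂ) * Complex.exp (θ * I) - 0)) ^ n *
          (((R:ℂ) * Complex.exp (θ * I) - 0)⁻¹ * g ((R:ℂ) * Complex.exp (θ * I))))) * (R:ℂ)^n
      from by rw [mul_assoc, intervalIntegral.integral_mul_const]]
  have hptwise : ∀ θ ∈ uIcc (0:ℝ) (2*Real.pi),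
      ((R:ℂ) * Complex.exp (θ * I) * I *
        ((1 / ((R:ℂ) * Complex.exp (θ * I) - 0)) ^ n *
          (((R:ℂ) * Complex.exp (θ * I) - 0)⁻¹ * g ((R:ℂ) * Complex.exp (θ * I))))) * (R:ℂ)^n
      = I * (Complex.exp (-(n:ℂ) * θ * I) * g ((R:ℂ) * Complex.exp (θ * I))) := by
    intro θ _
    have hR0 : (R:ℂ) ≠ 0 := by exact_mod_cast hR.ne'
    have hw : Complex.exp ((θ:ℂ) * I) ≠ 0 := Complex.exp_ne_zero _
    have hexp : Complex.exp (-(n:ℂ) * θ * I) = (Complex.exp ((θ:ℂ) * I))⁻¹ ^ n := by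
      rw [show -(n:ℂ) * θ * I = (n:ℂ) * -((θ:ℂ) * I) by ring, Complex.exp_nat_mul,
        Complex.exp_neg]
    rw [hexp]
    field_simp
    have hRR : (R:ℂ)^n * (R:ℂ)⁻¹^n = 1 := by rw [← mul_pow, mul_inv_cancel₀ hR0, one_pow]
    linear_combination ((R:ℂ) * Complex.exp (θ * I) * (Complex.exp (θ * I))⁻¹ ^ n * g ((R:ℂ) * Complex.exp (θ * I))) * hRR
  rw [intervalIntegral.integral_congr hptwise, intervalIntegral.integral_const_mul]
  rw [show ((2:ℂ) * (Real.pi:ℂ) * I)⁻¹ * (I * ∫ θ in (0:ℝ)..2*Real.pi,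
      Complex.exp (-(n:ℂ) * θ * I) * g ((R:ℂ) * Complex.exp (θ * I)))
    = (((2:ℂ) * (Real.pi:ℂ) * I)⁻¹ * I) * ∫ θ in (0:ℝ)..2*Real.pi,
      Complex.exp (-(n:ℂ) * θ * I) * g ((R:ℂ) * Complex.exp (θ * I)) from by ring]
  congr 1
  have hpi : (Real.pi:ℂ) ≠ 0 := by exact_mod_cast Real.pi_ne_zero
  field_simp



private lemma norm_exp_neg_n (n : ℕ) (θ : ℝ) : ‖Complex.exp (-(n:ℂ) * θ * I)‖ = 1 := by
  rw [show -(n:ℂ) * θ * I = ((-(n * θ) : ℝ) : ℂ) * I by push_cast; ring]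
  exact Complex.norm_exp_ofReal_mul_I _

private lemma coeff_limit {g : ℂ → ℂ} (hg_cont : ContinuousOn g (closedBall (0:ℂ) 1))
    {p : FormalMultilinearSeries ℂ ℂ ℂ}
    (hcfix : ∀ R : ℝ, 0 < R → R < 1 → cauchyPowerSeries g 0 R = p) (n : ℕ) :
    p.coeff n = (2 * (Real.pi:ℂ))⁻¹ *
      ∫ θ in (0:ℝ)..2*Real.pi, Complex.exp (-(n:ℂ) * θ * I) * g (Complex.exp (θ * I)) := by
  set rj : ℕ → ℝ := fun j => 1 - 1/(j+2) with hrj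
  have hrj0 : ∀ j, 0 < rj j := by
    intro j
    have h2 : (2:ℝ) ≤ (j:ℝ) + 2 := by have := Nat.cast_nonneg (α := ℝ) j; linarith
    have := one_div_le_one_div_of_le (by norm_num) h2
    simp only [hrj]
    norm_num at this ⊢
    linarith
  have hrj1 : ∀ j, rj j < 1 := by
    intro j
    have : 0 < 1/((j:ℝ)+2) := by positivity
    simp only [hrj]
    linarith
  have hrjmem : ∀ j (θ : ℝ), ((rj j : ℝ):ℂ) * Complex.exp (θ * I) ∈ closedBall (0:ℂ) 1 := by
    intro j θ
    rw [mem_closedBall_zero_iff, norm_mul, Complex.norm_real, Real.norm_eq_abs,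
      Complex.norm_exp_ofReal_mul_I, mul_one]
    rw [abs_of_pos (hrj0 j)]
    exact (hrj1 j).le
  have hrjt : Tendsto rj atTop (𝓝 1) := by
    have h0 : Tendsto (fun j:ℕ => 1/((j:ℝ)+2)) atTop (𝓝 0) := by
      have h1 := (tendsto_one_div_add_atTop_nhds_zero_nat (𝕜 := ℝ)).comp (tendsto_add_atTop_nat 1)
      have : (fun j:ℕ => 1/((j:ℝ)+2)) = (fun n:ℕ => 1/((n:ℝ)+1)) ∘ (fun j => j + 1) := by
        funext j; simp [Function.comp]; push_cast; ring_nf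
      rw [this]
      exact h1
    have := tendsto_const_nhds.sub h0 (α := ℕ) (f := fun _ : ℕ => (1:ℝ))
    simpa [hrj, one_div] using this
  have hc : Tendsto (fun j => ((rj j : ℝ):ℂ)) atTop (𝓝 1) := by
    have := (Complex.continuous_ofReal.tendsto 1).comp hrjt
    rw [← Complex.ofReal_one]; exact this
  have hLHS : Tendsto (fun j => p.coeff n * ((rj j : ℝ):ℂ)^n) atTop (𝓝 (p.coeff n)) := by
    have := tendsto_const_nhds (α := ℕ) (x := p.coeff n) |>.mul (hc.pow n)
    simpa using this
  have hkey : ∀ j, p.coeff n * ((rj j : ℝ):ℂ)^n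
      = (2 * (Real.pi:ℂ))⁻¹ * ∫ θ in (0:ℝ)..2*Real.pi,
          Complex.exp (-(n:ℂ) * θ * I) * g (((rj j : ℝ):ℂ) * Complex.exp (θ * I)) := by
    intro j
    rw [← hcfix (rj j) (hrj0 j) (hrj1 j)]
    exact cauchy_coeff_formula g (hrj0 j) n
  obtain ⟨M, hM⟩ := (isCompact_closedBall (0:ℂ) 1).exists_bound_of_continuousOn hg_cont
  have hRHS : Tendsto (fun j => ∫ θ in (0:ℝ)..2*Real.pi,
      Complex.exp (-(n:ℂ) * θ * I) * g (((rj j : ℝ):ℂ) * Complex.exp (θ * I))) atTop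
      (𝓝 (∫ θ in (0:ℝ)..2*Real.pi,
        Complex.exp (-(n:ℂ) * θ * I) * g (Complex.exp (θ * I)))) := by
    have hexpmem : ∀ θ : ℝ, Complex.exp ((θ:ℂ) * I) ∈ closedBall (0:ℂ) 1 := by
      intro θ
      rw [mem_closedBall_zero_iff, Complex.norm_exp_ofReal_mul_I]
    have hcontj : ∀ j, Continuous (fun θ : ℝ =>
        Complex.exp (-(n:ℂ) * θ * I) * g (((rj j : ℝ):ℂ) * Complex.exp (θ * I))) := by
      intro j
      have hc1 : Continuous (fun θ : ℝ => Complex.exp (-(n:ℂ) * θ * I)) :=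
        Complex.continuous_exp.comp
          (((continuous_const.mul Complex.continuous_ofReal).mul continuous_const))
      have hc2 : Continuous (fun θ : ℝ => ((rj j : ℝ):ℂ) * Complex.exp (θ * I)) :=
        continuous_const.mul
          (Complex.continuous_exp.comp (Complex.continuous_ofReal.mul continuous_const))
      exact hc1.mul (hg_cont.comp_continuous hc2 (hrjmem j))
    apply intervalIntegral.tendsto_integral_filter_of_dominated_convergence
        (bound := fun _ => M)
    · exact Eventually.of_forall fun j => (hcontj j).aestronglyMeasurable
    · refine Eventually.of_forall fun j => ae_of_all _ fun θ _ => ?_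
      rw [norm_mul, norm_exp_neg_n, one_mul]
      exact hM _ (hrjmem j θ)
    · exact intervalIntegrable_const
    · refine ae_of_all _ fun θ _ => ?_
      apply Tendsto.const_mul
      have hz : Tendsto (fun j => ((rj j : ℝ):ℂ) * Complex.exp ((θ:ℂ) * I)) atTop
          (𝓝 (Complex.exp ((θ:ℂ) * I))) := by
        have := hc.mul_const (Complex.exp ((θ:ℂ) * I))
        simpa using this
      have hgc := (hg_cont _ (hexpmem θ)).tendsto
      exact hgc.comp (tendsto_nhdsWithin_of_tendsto_nhds_of_eventually_within _ hz
        (Eventually.of_forall fun j => hrjmem j θ))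
  have hR2 := hRHS.const_mul ((2 * (Real.pi:ℂ))⁻¹)
  rw [show (fun j => (2 * (Real.pi:ℂ))⁻¹ * ∫ θ in (0:ℝ)..2*Real.pi,
      Complex.exp (-(n:ℂ) * θ * I) * g (((rj j : ℝ):ℂ) * Complex.exp (θ * I)))
      = (fun j => p.coeff n * ((rj j : ℝ):ℂ)^n) from funext fun j => (hkey j).symm] at hR2
  exact tendsto_nhds_unique hLHS hR2

private lemma rseq_tendsto : Filter.Tendsto (fun j : ℕ => 1 - 1/((j:ℝ)+2)) Filter.atTop (𝓝 1) := by
  have h0 : Tendsto (fun j:ℕ => 1/((j:ℝ)+2)) atTop (𝓝 0) := by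
    have h1 := (tendsto_one_div_add_atTop_nhds_zero_nat (𝕜 := ℝ)).comp (tendsto_add_atTop_nat 1)
    have he : (fun j:ℕ => 1/((j:ℝ)+2)) = (fun n:ℕ => 1/((n:ℝ)+1)) ∘ (fun j => j + 1) := by
      funext j; simp [Function.comp]; ring_nf
    rw [he]
    exact h1
  have := tendsto_const_nhds.sub h0 (α := ℕ) (f := fun _ : ℕ => (1:ℝ))
  simpa [one_div] using this

private lemma coeff_norm_bound2 {h : ℝ → ℂ} (hsm : ContDiff ℝ (⊤ : ℕ∞) h)
    (hper : Function.Periodic h (2 * Real.pi)) {k : ℕ} {B : ℝ}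
    (hbound : ∀ t ∈ Icc (0:ℝ) (2 * Real.pi), ‖iteratedDeriv k h t‖ ≤ B)
    {n : ℕ} (hn : 1 ≤ n) :
    ‖(2 * (Real.pi:ℂ))⁻¹ * ∫ θ in (0:ℝ)..2*Real.pi, Complex.exp (-(n:ℂ) * θ * I) * h θ‖
      ≤ B / n ^ k := by
  have hiter : (∫ θ in (0:ℝ)..2*Real.pi, Complex.exp (-(n:ℂ) * θ * I) * h θ)
      = ((n:ℂ) * I)⁻¹ ^ k * ∫ θ in (0:ℝ)..2*Real.pi,
          Complex.exp (-(n:ℂ) * θ * I) * iteratedDeriv k h θ := by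
    clear hbound
    induction k with
    | zero => simp [iteratedDeriv_zero]
    | succ k ih =>
        rw [ih, parts_step hsm hper hn k]
        ring
  have hJk : ‖∫ θ in (0:ℝ)..2*Real.pi, Complex.exp (-(n:ℂ)*θ*I) * iteratedDeriv k h θ‖
      ≤ B * |2*Real.pi - 0| := by
    apply intervalIntegral.norm_integral_le_of_norm_le_const
    intro x hx
    have hxI : x ∈ Icc (0:ℝ) (2*Real.pi) := by
      have he : uIoc (0:ℝ) (2*Real.pi) = Ioc 0 (2*Real.pi) :=
        uIoc_of_le (by positivity)
      rw [he] at hx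
      exact ⟨hx.1.le, hx.2⟩
    rw [norm_mul, norm_exp_neg_n, one_mul]
    exact hbound x hxI
  rw [hiter, norm_mul, norm_mul]
  have hnpos : (0:ℝ) < n := by exact_mod_cast hn
  have hni : ‖((n:ℂ) * I)⁻¹ ^ k‖ = ((n:ℝ)⁻¹) ^ k := by
    rw [norm_pow, norm_inv, norm_mul, Complex.norm_I, Complex.norm_natCast, mul_one]
  have h2pi : ‖(2 * (Real.pi:ℂ))⁻¹‖ = (2*Real.pi)⁻¹ := by
    rw [norm_inv, show (2*(Real.pi:ℂ)) = ((2*Real.pi:ℝ):ℂ) by push_cast; ring,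
      Complex.norm_real]
    rw [Real.norm_eq_abs, abs_of_pos Real.two_pi_pos]
  rw [hni, h2pi]
  have habs : |2*Real.pi - 0| = 2*Real.pi := by
    rw [sub_zero, abs_of_pos Real.two_pi_pos]
  rw [habs] at hJk
  have hmono : (2*Real.pi)⁻¹ * (((n:ℝ)⁻¹)^k *
      ‖∫ θ in (0:ℝ)..2*Real.pi, Complex.exp (-(n:ℂ)*θ*I) * iteratedDeriv k h θ‖)
      ≤ (2*Real.pi)⁻¹ * (((n:ℝ)⁻¹)^k * (B * (2*Real.pi))) := by
    have h2 : (0:ℝ) ≤ ((n:ℝ)⁻¹)^k := by positivity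
    apply mul_le_mul_of_nonneg_left (mul_le_mul_of_nonneg_left hJk h2) (by positivity)
  refine hmono.trans (le_of_eq ?_)
  rw [inv_pow]
  field_simp

private def RD (a : ℕ → ℂ) : Prop := ∀ k : ℕ, ∃ C : ℝ, ∀ n : ℕ, ‖a n‖ * ((n:ℝ)+1)^k ≤ C

private noncomputable def PS (a : ℕ → ℂ) (z : ℂ) : ℂ := ∑' n, a n * z ^ n

private def DS (a : ℕ → ℂ) (n : ℕ) : ℂ := ((n:ℂ)+1) * a (n+1)

private lemma RD_summable {a : ℕ → ℂ} (ha : RD a) (j : ℕ) :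
    Summable (fun n : ℕ => ‖a n‖ * ((n:ℝ)+1)^j) := by
  obtain ⟨C, hC⟩ := ha (j+2)
  have hs0 : Summable (fun n : ℕ => (((n:ℝ)+1)^2)⁻¹) := by
    have := (summable_nat_add_iff 1).2 ((Real.summable_nat_pow_inv (p := 2)).2 (by norm_num))
    refine this.congr fun n => ?_
    push_cast
    ring
  refine Summable.of_nonneg_of_le (fun n => by positivity) (fun n => ?_) (hs0.mul_left C)
  have hpos : (0:ℝ) < ((n:ℝ)+1)^2 := by positivity
  rw [← div_eq_mul_inv, le_div_iff₀ hpos]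
  calc ‖a n‖ * ((n:ℝ)+1)^j * ((n:ℝ)+1)^2 = ‖a n‖ * ((n:ℝ)+1)^(j+2) := by ring
    _ ≤ C := hC n

private lemma RD_ds {a : ℕ → ℂ} (ha : RD a) : RD (DS a) := by
  intro k
  obtain ⟨C, hC⟩ := ha (k+1)
  refine ⟨C, fun n => ?_⟩
  have h := hC (n+1)
  push_cast at h
  have hn : ‖(n:ℂ)+1‖ = (n:ℝ)+1 := by
    rw [show (n:ℂ)+1 = ((n+1:ℕ):ℂ) by push_cast; ring, Complex.norm_natCast]
    push_cast
    ring
  simp only [DS, norm_mul, hn]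
  calc ((n:ℝ)+1) * ‖a (n+1)‖ * ((n:ℝ)+1)^k = ‖a (n+1)‖ * ((n:ℝ)+1)^(k+1) := by ring
    _ ≤ ‖a (n+1)‖ * ((n:ℝ)+1+1)^(k+1) := by gcongr; linarith
    _ ≤ C := h

private lemma PS_cont {a : ℕ → ℂ} (ha : RD a) : ContinuousOn (PS a) (closedBall (0:ℂ) 1) := by
  refine continuousOn_tsum (f := fun n w => a n * w ^ n) (u := fun n => ‖a n‖ * ((n:ℝ)+1)^0)
    (fun n => (continuous_const.mul (continuous_pow n)).continuousOn) (RD_summable ha 0)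
    (fun n w hw => ?_)
  rw [mem_closedBall_zero_iff] at hw
  rw [norm_mul, norm_pow, pow_zero, mul_one]
  exact mul_le_of_le_one_right (norm_nonneg _) (pow_le_one₀ (norm_nonneg _) hw)

private noncomputable def LS : ℂ →L[ℝ] ℂ →L[ℝ] ℂ := ContinuousLinearMap.lsmul ℝ ℂ

private lemma norm_lsmul_le' (c : ℂ) : ‖LS c‖ ≤ ‖c‖ :=
  ContinuousLinearMap.opNorm_le_bound _ (norm_nonneg c) (fun v => by simp [LS, norm_mul])

private lemma hasDeriv_term (c : ℂ) (n : ℕ) (z : ℂ) :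
    HasFDerivAt (fun w : ℂ => c * w ^ n)
      (LS (c * ((n:ℂ) * z ^ (n-1)))) z := by
  have h1 := ((hasDerivAt_pow n z).const_mul c).hasFDerivAt.restrictScalars ℝ
  refine h1.congr_fderiv ?_
  refine ContinuousLinearMap.ext (fun (v : ℂ) => ?_)
  simp only [LS, ContinuousLinearMap.lsmul_apply, ContinuousLinearMap.coe_restrictScalars',
    ContinuousLinearMap.smulRight_apply, ContinuousLinearMap.one_apply, smul_eq_mul,
    ContinuousLinearMap.toSpanSingleton_apply]
  ring

private lemma term_bound (c w : ℂ) (n : ℕ) (hw : ‖w‖ ≤ 1) :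
    ‖c * ((n:ℂ) * w ^ (n-1))‖ ≤ ‖c‖ * ((n:ℝ)+1)^1 := by
  rw [norm_mul, norm_mul, norm_pow, Complex.norm_natCast, pow_one]
  have h1 : ‖w‖ ^ (n-1) ≤ 1 := pow_le_one₀ (norm_nonneg _) hw
  have h2 : (n:ℝ) * ‖w‖^(n-1) ≤ (n:ℝ)+1 := by
    nlinarith [pow_nonneg (norm_nonneg w) (n-1), (Nat.cast_nonneg n : (0:ℝ) ≤ n)]
  exact mul_le_mul_of_nonneg_left h2 (norm_nonneg _)

private lemma PS_hasFDerivAt {a : ℕ → ℂ} (ha : RD a) {x : ℂ} (hx : x ∈ ball (0:ℂ) 1) :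
    HasFDerivAt (PS a) (LS (PS (DS a) x)) x := by
  have hsd : ∀ w : ℂ, ‖w‖ ≤ 1 → Summable (fun n => a n * ((n:ℂ) * w ^ (n-1))) := fun w hw =>
    Summable.of_norm_bounded (RD_summable ha 1) (fun n => term_bound (a n) w n hw)
  have key := hasFDerivAt_tsum_of_isPreconnected (u := fun n => ‖a n‖ * ((n:ℝ)+1)^1)
    (f := fun n w => a n * w ^ n)
    (f' := fun n w => LS (a n * ((n:ℂ) * w ^ (n-1))))
    (RD_summable ha 1) isOpen_ball (convex_ball (0:ℂ) 1).isPreconnected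
    (fun n w _ => hasDeriv_term (a n) n w)
    (fun n w hw => (norm_lsmul_le' _).trans
      (term_bound (a n) w n (le_of_lt (mem_ball_zero_iff.1 hw))))
    (mem_ball_self one_pos)
    (Summable.of_norm_bounded (RD_summable ha 0) (fun n => by
      simp only [pow_zero, mul_one, norm_mul, norm_pow, norm_zero]
      exact mul_le_of_le_one_right (norm_nonneg _) (pow_le_one₀ le_rfl zero_le_one))) hx
  have hxn : ‖x‖ ≤ 1 := le_of_lt (mem_ball_zero_iff.1 hx)
  have hval : (∑' n, LS (a n * ((n:ℂ) * x ^ (n-1))))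
      = LS (PS (DS a) x) := by
    rw [← LS.map_tsum (hsd x hxn)]
    congr 1
    rw [(hsd x hxn).tsum_eq_zero_add]
    simp only [PS, DS]
    simp only [Nat.cast_zero, zero_mul, mul_zero, zero_add, Nat.add_sub_cancel]
    refine tsum_congr fun m => ?_
    push_cast
    ring
  rw [hval] at key
  exact key

private lemma PS_hasFDerivWithinAt {a : ℕ → ℂ} (ha : RD a) {x : ℂ}
    (hx : x ∈ closedBall (0:ℂ) 1) :
    HasFDerivWithinAt (PS a) (LS (PS (DS a) x))
      (closedBall (0:ℂ) 1) x := by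
  have hcl : closure (ball (0:ℂ) 1) = closedBall 0 1 := closure_ball 0 one_ne_zero
  have hx' := hx
  rw [← hcl] at hx ⊢
  apply hasFDerivWithinAt_closure_of_tendsto_fderiv
  · exact fun y hy => (PS_hasFDerivAt ha hy).differentiableAt.differentiableWithinAt
  · exact convex_ball _ _
  · exact isOpen_ball
  · intro y hy
    rw [hcl] at hy
    exact ((PS_cont ha) y hy).mono ball_subset_closedBall
  · have h1 : Tendsto (fun y => LS (PS (DS a) y))
        (𝓝[ball (0:ℂ) 1] x) (𝓝 (LS (PS (DS a) x))) :=
      (LS.continuous.tendsto _).comp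
        (((PS_cont (RD_ds ha)) x hx').mono ball_subset_closedBall).tendsto
    refine h1.congr' ?_
    filter_upwards [self_mem_nhdsWithin] with y hy
    exact (PS_hasFDerivAt ha hy).fderiv.symm

private lemma PS_contDiffOn : ∀ m : ℕ, ∀ a : ℕ → ℂ, RD a →
    ContDiffOn ℝ m (PS a) (closedBall (0:ℂ) 1) := by
  have hUD : UniqueDiffOn ℝ (closedBall (0:ℂ) 1) :=
    uniqueDiffOn_convex (convex_closedBall _ _)
      (by rw [interior_closedBall _ one_ne_zero]; exact ⟨0, mem_ball_self one_pos⟩)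
  intro m
  induction m with
  | zero => intro a ha; exact contDiffOn_zero.2 (PS_cont ha)
  | succ m ih =>
    intro a ha
    rw [Nat.cast_succ, contDiffOn_succ_iff_fderivWithin hUD]
    refine ⟨fun x hx => (PS_hasFDerivWithinAt ha hx).differentiableWithinAt, by simp, ?_⟩
    have h2 : ContDiffOn ℝ m (fun y => LS (PS (DS a) y))
        (closedBall (0:ℂ) 1) :=
      LS.contDiff.comp_contDiffOn (ih _ (RD_ds ha))
    exact h2.congr fun y hy => (PS_hasFDerivWithinAt ha hy).fderivWithin (hUD y hy)

theorem smooth_up_to_boundary_disc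
    (g : ℂ → ℂ)
    (hg_cont : ContinuousOn g (closedBall (0:ℂ) 1))
    (hg_holo : DifferentiableOn ℂ g (ball (0:ℂ) 1))
    (hg_bdry : ContDiff ℝ (⊤ : ℕ∞) (fun θ : ℝ => g (Complex.exp (θ * Complex.I)))) :
    ContDiffOn ℝ (⊤ : ℕ∞) g (closedBall (0:ℂ) 1) := by
  set h : ℝ → ℂ := fun θ : ℝ => g (Complex.exp (θ * Complex.I)) with hhdef
  have hper : Function.Periodic h (2 * Real.pi) := by
    intro x
    simp only [hhdef]
    congr 1
    rw [show ((x + 2*Real.pi : ℝ) : ℂ) * I = (x:ℂ)*I + 2*(Real.pi:ℂ)*I by push_cast; ring,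
      Complex.exp_add, Complex.exp_two_pi_mul_I, mul_one]
  have hballN : ∀ Q : NNReal, 0 < Q → (Q:ℝ) < 1 →
      HasFPowerSeriesOnBall g (cauchyPowerSeries g 0 (Q:ℝ)) 0 Q := fun Q h0 h1 =>
    (hg_holo.mono (closedBall_subset_ball h1)).hasFPowerSeriesOnBall h0
  have hhalf1 : (((1:NNReal)/2 : NNReal) : ℝ) < 1 := by norm_num
  have hphalf := hballN (1/2) (by norm_num) hhalf1
  set p : FormalMultilinearSeries ℂ ℂ ℂ :=
    cauchyPowerSeries g 0 ((((1:NNReal)/2 : NNReal)):ℝ) with hpdef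
  have hcfix : ∀ R' : ℝ, 0 < R' → R' < 1 → cauchyPowerSeries g 0 R' = p := by
    intro R' h0 h1
    have hQ : (R'.toNNReal : ℝ) = R' := Real.coe_toNNReal _ h0.le
    have h0' : 0 < R'.toNNReal := Real.toNNReal_pos.2 h0
    have hthis := hballN R'.toNNReal h0' (by rw [hQ]; exact h1)
    rw [hQ] at hthis
    exact hthis.hasFPowerSeriesAt.eq_formalMultilinearSeries hphalf.hasFPowerSeriesAt
  have hcoeff := coeff_limit hg_cont hcfix
  have hrapid : RD (fun n => p.coeff n) := by
    intro k
    obtain ⟨B, hB⟩ := isCompact_Icc.exists_bound_of_continuousOn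
      ((hg_bdry.continuous_iteratedDeriv k (by exact_mod_cast le_top)).continuousOn
        (s := Icc (0:ℝ) (2*Real.pi)))
    refine ⟨max ‖p.coeff 0‖ (2^k * B), fun n => ?_⟩
    rcases Nat.eq_zero_or_pos n with rfl | hn
    · simp
    · have hb : ‖p.coeff n‖ ≤ B / n^k := by
        rw [hcoeff n]
        exact coeff_norm_bound2 hg_bdry hper (fun t ht => hB t ht) hn
      have hnpos : (0:ℝ) < n := by exact_mod_cast hn
      have hn1 : (1:ℝ) ≤ n := by exact_mod_cast hn
      have h1 : ((n:ℝ)+1)^k ≤ 2^k * (n:ℝ)^k := by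
        rw [← mul_pow]; gcongr; linarith
      have h2 : ‖p.coeff n‖ * (n:ℝ)^k ≤ B := by rwa [le_div_iff₀ (by positivity)] at hb
      calc ‖p.coeff n‖ * ((n:ℝ)+1)^k ≤ ‖p.coeff n‖ * (2^k * (n:ℝ)^k) := by gcongr
        _ = 2^k * (‖p.coeff n‖ * (n:ℝ)^k) := by ring
        _ ≤ 2^k * B := by gcongr
        _ ≤ _ := le_max_right _ _
  have hPS : ∀ z, p.sum z = PS (fun n => p.coeff n) z := by
    intro z
    simp only [FormalMultilinearSeries.sum, PS]
    refine tsum_congr fun n => ?_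
    rw [FormalMultilinearSeries.apply_eq_pow_smul_coeff, smul_eq_mul, mul_comm]
  have hopen : ∀ z ∈ ball (0:ℂ) 1, g z = p.sum z := by
    intro z hz
    rw [mem_ball_zero_iff] at hz
    set R' : ℝ := (‖z‖ + 1)/2 with hR'def
    have h0 : 0 < R' := by positivity
    have h1 : R' < 1 := by rw [hR'def]; linarith
    have hzR : ‖z‖ < R' := by rw [hR'def]; linarith
    have hQ : (R'.toNNReal : ℝ) = R' := Real.coe_toNNReal _ h0.le
    have hps := hballN R'.toNNReal (Real.toNNReal_pos.2 h0) (by rw [hQ]; exact h1)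
    rw [show cauchyPowerSeries g 0 ((R'.toNNReal:ℝ)) = p from by
      rw [hQ]; exact hcfix R' h0 h1] at hps
    have hmem : z ∈ Metric.eball (0:ℂ) ((R'.toNNReal : NNReal) : ENNReal) := by
      rw [mem_emetric_ball_zero_iff, enorm_eq_nnnorm]
      rw [ENNReal.coe_lt_coe]
      rw [← NNReal.coe_lt_coe, coe_nnnorm, hQ]
      exact hzR
    have hsum := (hps.hasSum hmem).tsum_eq
    rw [zero_add] at hsum
    exact hsum.symm
  have hEq : ∀ z ∈ closedBall (0:ℂ) 1, g z = p.sum z := by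
    intro z hz
    have hz1 := mem_closedBall_zero_iff.1 hz
    rcases lt_or_eq_of_le hz1 with hlt | heq
    · exact hopen z (mem_ball_zero_iff.2 hlt)
    · set zj : ℕ → ℂ := fun j => ((1 - 1/((j:ℝ)+2) : ℝ) : ℂ) * z with hzj
      have hrj0 : ∀ j : ℕ, 0 < 1 - 1/((j:ℝ)+2) := by
        intro j
        have h2 : (2:ℝ) ≤ (j:ℝ) + 2 := by
          have := Nat.cast_nonneg (α := ℝ) j; linarith
        have := one_div_le_one_div_of_le (by norm_num) h2
        norm_num at this ⊢
        linarith
      have hrj1 : ∀ j : ℕ, 1 - 1/((j:ℝ)+2) < 1 := by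
        intro j
        have : 0 < 1/((j:ℝ)+2) := by positivity
        linarith
      have hmemj : ∀ j, zj j ∈ ball (0:ℂ) 1 := by
        intro j
        rw [mem_ball_zero_iff, hzj]
        simp only
        rw [norm_mul, Complex.norm_real, Real.norm_eq_abs, abs_of_pos (hrj0 j), heq, mul_one]
        exact hrj1 j
      have htend : Tendsto zj atTop (𝓝 z) := by
        have h1 : Tendsto (fun j : ℕ => ((1 - 1/((j:ℝ)+2) : ℝ) : ℂ)) atTop (𝓝 1) := by
          have := (Complex.continuous_ofReal.tendsto 1).comp rseq_tendsto
          simpa [Function.comp_def, one_div] using this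
        have := h1.mul_const z
        rw [hzj]
        simpa [one_div] using this
      have hgt : Tendsto (fun j => g (zj j)) atTop (𝓝 (g z)) := by
        have hgc := (hg_cont z hz).tendsto
        exact hgc.comp (tendsto_nhdsWithin_of_tendsto_nhds_of_eventually_within _ htend
          (Eventually.of_forall fun j => ball_subset_closedBall (hmemj j)))
      have hst : Tendsto (fun j => p.sum (zj j)) atTop (𝓝 (p.sum z)) := by
        simp only [hPS]
        exact ((PS_cont hrapid) z hz).tendsto.comp
          (tendsto_nhdsWithin_of_tendsto_nhds_of_eventually_within _ htend
            (Eventually.of_forall fun j => ball_subset_closedBall (hmemj j)))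
      have heqj : (fun j => g (zj j)) = (fun j => p.sum (zj j)) :=
        funext fun j => hopen (zj j) (hmemj j)
      rw [heqj] at hgt
      exact tendsto_nhds_unique hgt hst
  have hcd : ContDiffOn ℝ (⊤ : ℕ∞) (PS (fun n => p.coeff n)) (closedBall (0:ℂ) 1) :=
    contDiffOn_infty.2 fun m => PS_contDiffOn m _ hrapid
  exact hcd.congr fun z hz => (hEq z hz).trans (hPS z)
end

section
/- Let h be a framing datum with image A = h(ℝ × [0,1]) and associated path X. Let V : ℂ → ℂ be infinitely differentiable in the real sense, and suppose that at every point w ∈ A the real Fréchet derivative of V at w is complex-linear (i.e. ∂V/∂z̄ vanishes on A). Define f(θ, t) := V(h(θ,t)) / (∂h/∂θ)(θ,t). Then f satisfies, at every (θ, t) with t ∈ [0,1]: ∂f/∂t = (∂X/∂θ)·f − X·(∂f/∂θ). -/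
open Set Complex Real

private lemma slice1 {g : ℝ × ℝ → ℂ} {L : ℝ × ℝ →L[ℝ] ℂ} {θ t : ℝ}
    (hg : HasFDerivAt g L (θ, t)) :
    HasDerivAt (fun x => g (x, t)) (L (1, 0)) θ := by
  have h1 : HasDerivAt (fun x : ℝ => ((x, t) : ℝ × ℝ)) ((1 : ℝ), (0 : ℝ)) θ :=
    (hasDerivAt_id θ).prodMk (hasDerivAt_const θ t)
  exact hg.comp_hasDerivAt θ h1

private lemma slice2 {g : ℝ × ℝ → ℂ} {L : ℝ × ℝ →L[ℝ] ℂ} {θ t : ℝ}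
    (hg : HasFDerivAt g L (θ, t)) :
    HasDerivAt (fun s => g (θ, s)) (L (0, 1)) t := by
  have h1 : HasDerivAt (fun s : ℝ => ((θ, s) : ℝ × ℝ)) ((0 : ℝ), (1 : ℝ)) t :=
    (hasDerivAt_const t θ).prodMk (hasDerivAt_id t)
  exact hg.comp_hasDerivAt t h1

theorem pullback_of_holomorphic_vector_field
    (h : ℝ × ℝ → ℂ)
    (hsm : ContDiff ℝ (⊤ : ℕ∞) h)
    (hper : ∀ θ t, h (θ + 2 * π, t) = h (θ, t))
    (hinj : ∀ t ∈ Icc (0:ℝ) 1, InjOn (fun θ => h (θ, t)) (Ico 0 (2 * π)))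
    (hderiv : ∀ θ : ℝ, ∀ t ∈ Icc (0:ℝ) 1, deriv (fun x => h (x, t)) θ ≠ 0)
    (hinward : ∀ θ : ℝ, ∀ t ∈ Icc (0:ℝ) 1,
      (deriv (fun s => h (θ, s)) t / deriv (fun x => h (x, t)) θ).im ≤ 0)
    (A : Set ℂ) (hA : A = h '' (univ ×ˢ Icc (0:ℝ) 1))
    (X : ℝ × ℝ → ℂ)
    (hX : ∀ θ t, X (θ, t) = -(deriv (fun s => h (θ, s)) t) / deriv (fun x => h (x, t)) θ)
    (V : ℂ → ℂ)
    (hV_sm : ContDiff ℝ (⊤ : ℕ∞) V)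
    (hV_CR : ∀ w ∈ A, fderiv ℝ V w Complex.I = Complex.I * fderiv ℝ V w 1)
    (f : ℝ × ℝ → ℂ)
    (hf : ∀ θ t, f (θ, t) = V (h (θ, t)) / deriv (fun x => h (x, t)) θ) :
    ∀ θ : ℝ, ∀ t ∈ Icc (0:ℝ) 1,
      deriv (fun s => f (θ, s)) t =
        deriv (fun x => X (x, t)) θ * f (θ, t) - X (θ, t) * deriv (fun x => f (x, t)) θ := by
  intro θ t ht
  have hd : Differentiable ℝ h := hsm.differentiable (by simp)
  have hdV : Differentiable ℝ V := hV_sm.differentiable (by simp)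
  set Hθ : ℝ × ℝ → ℂ := fun q => fderiv ℝ h q (1, 0) with hHθdef
  set Ht : ℝ × ℝ → ℂ := fun q => fderiv ℝ h q (0, 1) with hHtdef
  -- identification of partial derivatives
  have hderθ : ∀ x s : ℝ, deriv (fun y => h (y, s)) x = Hθ (x, s) :=
    fun x s => (slice1 (hd (x, s)).hasFDerivAt).deriv
  have hdert : ∀ x s : ℝ, deriv (fun r => h (x, r)) s = Ht (x, s) :=
    fun x s => (slice2 (hd (x, s)).hasFDerivAt).deriv
  set a := Hθ (θ, t) with hadef
  set b := Ht (θ, t) with hbdef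
  have ha : a ≠ 0 := by
    have := hderiv θ t ht
    rwa [hderθ θ t] at this
  -- second derivative
  have hd2 : Differentiable ℝ (fderiv ℝ h) :=
    (hsm.fderiv_right (m := 1) ((by norm_cast))).differentiable one_ne_zero
  set F2 := fderiv ℝ (fderiv ℝ h) (θ, t) with hF2def
  have hF2 : HasFDerivAt (fderiv ℝ h) F2 (θ, t) := (hd2 (θ, t)).hasFDerivAt
  have hsymm : ∀ v w : ℝ × ℝ, F2 v w = F2 w v :=
    second_derivative_symmetric (fun y => (hd y).hasFDerivAt) hF2
  -- derivatives of Hθ, Ht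
  have hHθfd : HasFDerivAt Hθ ((ContinuousLinearMap.apply ℝ ℂ ((1:ℝ), (0:ℝ))).comp F2) (θ, t) :=
    (ContinuousLinearMap.apply ℝ ℂ ((1:ℝ), (0:ℝ))).hasFDerivAt.comp (θ, t) hF2
  have hHtfd : HasFDerivAt Ht ((ContinuousLinearMap.apply ℝ ℂ ((0:ℝ), (1:ℝ))).comp F2) (θ, t) :=
    (ContinuousLinearMap.apply ℝ ℂ ((0:ℝ), (1:ℝ))).hasFDerivAt.comp (θ, t) hF2
  set c := F2 (1, 0) (1, 0) with hcdef
  set d := F2 (0, 1) (1, 0) with hddef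
  have hHθ_t : HasDerivAt (fun s => Hθ (θ, s)) d t := by
    have := slice2 hHθfd; simpa using this
  have hHθ_θ : HasDerivAt (fun x => Hθ (x, t)) c θ := by
    have := slice1 hHθfd; simpa using this
  have hHt_θ : HasDerivAt (fun x => Ht (x, t)) (F2 (1, 0) (0, 1)) θ := by
    have := slice1 hHtfd; simpa using this
  have hsym : F2 (1, 0) (0, 1) = d := hsymm _ _
  rw [hsym] at hHt_θ
  -- Cauchy-Riemann: complex linearity of the derivative of V at h (θ, t)
  have hmem : h (θ, t) ∈ A := by
    rw [hA]; exact ⟨(θ, t), ⟨mem_univ θ, ht⟩, rfl⟩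
  set w0 := fderiv ℝ V (h (θ, t)) 1 with hw0def
  have hCR : ∀ z : ℂ, fderiv ℝ V (h (θ, t)) z = z * w0 := by
    intro z
    have hI := hV_CR (h (θ, t)) hmem
    have hz : z = z.re • (1 : ℂ) + z.im • Complex.I := by
      rw [Complex.real_smul, Complex.real_smul, mul_one, Complex.re_add_im]
    conv_lhs => rw [hz]
    rw [map_add, ContinuousLinearMap.map_smul, ContinuousLinearMap.map_smul, hI,
      Complex.real_smul, Complex.real_smul, ← hw0def]
    rw [show (↑z.re * w0 + ↑z.im * (Complex.I * w0) : ℂ) = (↑z.re + ↑z.im * Complex.I) * w0 by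
      ring, Complex.re_add_im]
  -- derivative of V ∘ h along the slices
  have hVt : HasDerivAt (fun s => V (h (θ, s))) (b * w0) t := by
    have := (hdV (h (θ, t))).hasFDerivAt.comp_hasDerivAt t (slice2 (hd (θ, t)).hasFDerivAt)
    rw [show fderiv ℝ h (θ, t) (0, 1) = b from rfl, hCR b] at this
    exact this
  have hVθ : HasDerivAt (fun x => V (h (x, t))) (a * w0) θ := by
    have := (hdV (h (θ, t))).hasFDerivAt.comp_hasDerivAt θ (slice1 (hd (θ, t)).hasFDerivAt)
    rw [show fderiv ℝ h (θ, t) (1, 0) = a from rfl, hCR a] at this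
    exact this
  -- derivative of f in the t direction
  have hfeq_t : (fun s => f (θ, s)) = fun s => V (h (θ, s)) / Hθ (θ, s) := by
    funext s; rw [hf, hderθ]
  have hft : deriv (fun s => f (θ, s)) t = (b * w0 * a - V (h (θ, t)) * d) / a ^ 2 := by
    rw [hfeq_t]
    exact (hVt.div hHθ_t ha).deriv
  -- derivative of f in the θ direction
  have hfeq_θ : (fun x => f (x, t)) = fun x => V (h (x, t)) / Hθ (x, t) := by
    funext x; rw [hf, hderθ]
  have hfθ : deriv (fun x => f (x, t)) θ = (a * w0 * a - V (h (θ, t)) * c) / a ^ 2 := by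
    rw [hfeq_θ]
    exact (hVθ.div hHθ_θ ha).deriv
  -- derivative of X in the θ direction
  have hXeq : (fun x => X (x, t)) = fun x => -Ht (x, t) / Hθ (x, t) := by
    funext x; rw [hX, hdert, hderθ]
  have hXθ : deriv (fun x => X (x, t)) θ = (-d * a - -b * c) / a ^ 2 := by
    rw [hXeq]
    exact ((hHt_θ.neg).div hHθ_θ ha).deriv
  -- values
  have hfval : f (θ, t) = V (h (θ, t)) / a := by rw [hf, hderθ]
  have hXval : X (θ, t) = -b / a := by rw [hX, hdert, hderθ]
  rw [hft, hfθ, hXθ, hfval, hXval]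
  field_simp
  ring
end

section
/- Let Y : ℂ × ℝ → ℂ be continuously differentiable (ContDiff ℝ 1, viewing ℂ as ℝ²) and suppose that Re( conj(z) · Y(z, t) ) ≤ 0 for every t ∈ ℝ and every z ∈ ℂ with |z| = 1. Let a ≤ b be real numbers and let g : [a, b] → ℂ be differentiable with g′(s) = Y(g(s), s) for all s ∈ [a, b], and suppose |g(a)| ≤ 1. Then |g(s)| ≤ 1 for all s ∈ [a, b]. (Forward invariance of the closed unit disc under a time-dependent vector field that is inward-pointing, possibly tangentially, on the unit circle.) -/
/-!
Along a trajectory, `φ = ‖g‖²` has derivative `2⟪g, Y (g, s)⟫`. The radial component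
`⟪z, Y (z, t)⟫` is `≤ 0` on the unit sphere and, being `C¹`, is Lipschitz on a compact set
containing the trajectory and its radial projection to the sphere, so it is `≤ K (‖z‖² - 1)`
outside the ball. Hence `φ - 1` obeys a linear differential inequality wherever it is positive,
and comparison with the barriers `1 + δ exp ((2K + 1) (s - s₀))`, `δ > 0`, gives `φ ≤ 1`.
-/

open Set

theorem image_le_of_deriv_right_le_mul_sub {φ φ' : ℝ → ℝ} {a b c C : ℝ}
    (hφ : ContinuousOn φ (Icc a b)) (hφ' : ∀ x ∈ Ico a b, HasDerivWithinAt φ (φ' x) (Ici x) x)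
    (ha : φ a ≤ c) (bound : ∀ x ∈ Ico a b, c < φ x → φ' x ≤ C * (φ x - c)) :
    ∀ x ∈ Icc a b, φ x ≤ c := by
  intro x hx
  refine le_of_forall_pos_le_add fun δ hδ => ?_
  set B : ℝ → ℝ := fun y => c + δ * Real.exp ((C + 1) * (y - x))
  have hB : ∀ y, HasDerivAt B ((C + 1) * (δ * Real.exp ((C + 1) * (y - x)))) y := fun y => by
    have := (((hasDerivAt_id' y).sub_const x).const_mul (C + 1)).exp.const_mul δ |>.const_add c
    exact this.congr_deriv (by ring)
  have hBa : φ a ≤ B a := ha.trans (le_add_of_nonneg_right (by positivity))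
  have key := image_le_of_deriv_right_lt_deriv_boundary hφ hφ' hBa hB (fun y hy hyB => by
    have hpos : 0 < δ * Real.exp ((C + 1) * (y - x)) := by positivity
    have hcy : c < φ y := by rw [hyB]; simp only [B]; linarith
    calc φ' y ≤ C * (φ y - c) := bound y hy hcy
      _ = C * (δ * Real.exp ((C + 1) * (y - x))) := by rw [hyB]; simp only [B]; ring
      _ < (C + 1) * (δ * Real.exp ((C + 1) * (y - x))) := by nlinarith) hx
  simpa [B] using key

theorem norm_sub_inv_norm_smul_self {E : Type*} [NormedAddCommGroup E] [NormedSpace ℝ E]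
    {z : E} (hz : z ≠ 0) : ‖z - ‖z‖⁻¹ • z‖ = |‖z‖ - 1| := by
  have hz' : ‖z‖ ≠ 0 := norm_ne_zero_iff.mpr hz
  rw [show z - ‖z‖⁻¹ • z = (1 - ‖z‖⁻¹) • z by rw [sub_smul, one_smul], norm_smul,
    Real.norm_eq_abs, ← abs_norm z, ← abs_mul, abs_norm, sub_mul, inv_mul_cancel₀ hz', one_mul]

theorem le_mul_norm_sub_one_of_lipschitzOnWith {E α : Type*} [NormedAddCommGroup E]
    [NormedSpace ℝ E] [PseudoMetricSpace α] {u : E × α → ℝ} {K : NNReal} {S : Set (E × α)}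
    (hu : LipschitzOnWith K u S) {z : E} {t : α} (hz : 1 ≤ ‖z‖) (hzS : (z, t) ∈ S)
    (hwS : (‖z‖⁻¹ • z, t) ∈ S) (hsphere : u (‖z‖⁻¹ • z, t) ≤ 0) :
    u (z, t) ≤ K * (‖z‖ - 1) := by
  have hz0 : z ≠ 0 := norm_pos_iff.mp (by linarith)
  have hdist : dist (z, t) (‖z‖⁻¹ • z, t) = ‖z‖ - 1 := by
    rw [Prod.dist_eq, dist_self, max_eq_left dist_nonneg, dist_eq_norm,
      norm_sub_inv_norm_smul_self hz0, abs_of_nonneg (by linarith)]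
  have hlip := hu.dist_le_mul _ hzS _ hwS
  rw [hdist, Real.dist_eq] at hlip
  linarith [le_abs_self (u (z, t) - u (‖z‖⁻¹ • z, t))]

open scoped RealInnerProductSpace in
theorem norm_le_one_of_hasDerivWithinAt_of_inner_nonpos {E : Type*} [NormedAddCommGroup E]
    [InnerProductSpace ℝ E] {Y : E × ℝ → E} (hY : ContDiff ℝ 1 Y)
    (hY_in : ∀ t : ℝ, ∀ z : E, ‖z‖ = 1 → ⟪z, Y (z, t)⟫ ≤ 0) {a b : ℝ} {g : ℝ → E}
    (hg : ∀ s ∈ Icc a b, HasDerivWithinAt g (Y (g s, s)) (Icc a b) s) (hga : ‖g a‖ ≤ 1) :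
    ∀ s ∈ Icc a b, ‖g s‖ ≤ 1 := by
  have hgc : ContinuousOn g (Icc a b) := fun s hs => (hg s hs).continuousWithinAt
  -- contains each `g s` together with its radial projection to the sphere
  set S := (fun q : ℝ × ℝ => (q.1 • g q.2, q.2)) '' (Icc 0 1 ×ˢ Icc a b)
  have hS : IsCompact S := (isCompact_Icc.prod isCompact_Icc).image_of_continuousOn
    ((continuousOn_fst.smul (hgc.comp continuousOn_snd fun _ hq => hq.2)).prodMk continuousOn_snd)
  have hmem : ∀ s ∈ Icc a b, ∀ r ∈ Icc (0 : ℝ) 1, (r • g s, s) ∈ S :=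
    fun s hs r hr => ⟨(r, s), ⟨hr, hs⟩, rfl⟩
  obtain ⟨K, hK⟩ := ((contDiff_fst.inner ℝ hY).locallyLipschitz.locallyLipschitzOn (s := S)
    ).exists_lipschitzOnWith_of_compact hS
  have hradial : ∀ s ∈ Icc a b, 1 < ‖g s‖ ^ 2 → ⟪g s, Y (g s, s)⟫ ≤ K * (‖g s‖ ^ 2 - 1) := by
    intro s hs h1
    have hn : 1 ≤ ‖g s‖ := ((one_lt_sq_iff₀ (norm_nonneg _)).mp h1).le
    have hg0 : g s ≠ 0 := norm_pos_iff.mp (by linarith)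
    calc ⟪g s, Y (g s, s)⟫
        ≤ K * (‖g s‖ - 1) := le_mul_norm_sub_one_of_lipschitzOnWith hK hn
          (by simpa using hmem s hs 1 ⟨zero_le_one, le_rfl⟩)
          (hmem s hs _ ⟨by positivity, inv_le_one_of_one_le₀ hn⟩)
          (hY_in s _ (norm_smul_inv_norm hg0))
      _ ≤ K * (‖g s‖ ^ 2 - 1) := by gcongr; nlinarith
  have hsq := image_le_of_deriv_right_le_mul_sub (φ := fun s => ‖g s‖ ^ 2) (c := 1) (C := 2 * K)
    (hgc.norm.pow 2)
    (fun s hs => (hg s (Ico_subset_Icc_self hs)).norm_sq.mono_of_mem_nhdsWithin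
      (Icc_mem_nhdsGE_of_mem hs))
    (pow_le_one₀ (norm_nonneg _) hga)
    (fun s hs h1 => by linarith [hradial s (Ico_subset_Icc_self hs) h1])
  exact fun s hs => (sq_le_one_iff₀ (norm_nonneg _)).mp (hsq s hs)

theorem closed_unit_disc_forward_invariant_general
    (Y : ℂ × ℝ → ℂ)
    (hY : ContDiff ℝ 1 Y)
    (hY_in : ∀ t : ℝ, ∀ z : ℂ, ‖z‖ = 1 → ((starRingEnd ℂ) z * Y (z, t)).re ≤ 0)
    (a b : ℝ)
    (g : ℝ → ℂ)
    (hg : ∀ s ∈ Icc a b, HasDerivWithinAt g (Y (g s, s)) (Icc a b) s)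
    (hga : ‖g a‖ ≤ 1) :
    ∀ s ∈ Icc a b, ‖g s‖ ≤ 1 :=
  norm_le_one_of_hasDerivWithinAt_of_inner_nonpos hY
    (fun t z hz => by simpa only [Complex.inner, mul_comm] using hY_in t z hz) hg hga

theorem closed_unit_disc_forward_invariant
    (Y : ℂ × ℝ → ℂ)
    (hY : ContDiff ℝ 1 Y)
    (hY_in : ∀ t : ℝ, ∀ z : ℂ, ‖z‖ = 1 → ((starRingEnd ℂ) z * Y (z, t)).re ≤ 0)
    (a b : ℝ) (hab : a ≤ b)
    (g : ℝ → ℂ)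
    (hg : ∀ s ∈ Icc a b, HasDerivWithinAt g (Y (g s, s)) (Icc a b) s)
    (hga : ‖g a‖ ≤ 1) :
    ∀ s ∈ Icc a b, ‖g s‖ ≤ 1 :=
  closed_unit_disc_forward_invariant_general Y hY hY_in a b g hg hga
end

section
/- Let n ∈ ℤ and let α ∈ ℝ, and set z := e^{iα}. Then the principal value limit lim_{ε → 0⁺} (1/(2πi)) ∫_{{θ ∈ [0, 2π] : |e^{iθ} − z| ≥ ε}} e^{inθ} · (i e^{iθ})/(e^{iθ} − z) dθ exists and equals (1/2)·e^{inα} if n ≥ 0, and equals −(1/2)·e^{inα} if n < 0. -/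
/-!
Write `z = e^{iα}` and `w = e^{iθ}`. From `w^{n+1}/(w - z) = z w^n/(w - z) + w^n`, the truncated
integrals satisfy `T_ε(n + 1) = z T_ε(n) + (2π)⁻¹ ∫_{|w - z| ≥ ε} w^{n+1} dθ`, and the last
integral tends to the Fourier coefficient `[n + 1 = 0]`; so the claim propagates from `n = 0` to
all `n ∈ ℤ` in both directions. For `n = 0`, the reflection `θ ↦ 2α - θ` preserves the truncated
domain and turns the kernel `iw/(w - z)` into `iz/(z - w)`; the two add up to `i`, so over one
period centred at `α` the kernel averages to `i/2`.
-/

open Set Complex Real Filter MeasureTheory Topology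

theorem tendsto_setIntegral_inter_setOf_le {X E : Type*} [MeasurableSpace X]
    [NormedAddCommGroup E] [NormedSpace ℝ E] {μ : Measure X} {s : Set X} {f : X → E}
    {d : X → ℝ} (hd : Measurable d) (hd_pos : ∀ᵐ x ∂μ, 0 < d x) (hf : IntegrableOn f s μ) :
    Tendsto (fun ε : ℝ => ∫ x in s ∩ {x | ε ≤ d x}, f x ∂μ) (𝓝[>] 0)
      (𝓝 (∫ x in s, f x ∂μ)) := by
  have hmeas (ε : ℝ) : MeasurableSet {x | ε ≤ d x} := measurableSet_le measurable_const hd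
  simp_rw [← setIntegral_indicator (hmeas _)]
  refine tendsto_integral_filter_of_dominated_convergence (fun x => ‖f x‖)
    (Eventually.of_forall fun ε => hf.aestronglyMeasurable.indicator (hmeas ε))
    (Eventually.of_forall fun ε => ae_of_all _ fun x => norm_indicator_le_norm_self _ _)
    hf.norm ?_
  filter_upwards [ae_restrict_of_ae hd_pos] with x hx
  refine tendsto_const_nhds.congr' ?_
  filter_upwards [Ioo_mem_nhdsGT hx] with ε hε
  exact (indicator_of_mem (show x ∈ {x | ε ≤ d x} from hε.2.le) f).symm

theorem integral_exp_int_mul_ofReal_mul_I (k : ℤ) :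
    ∫ θ in (0 : ℝ)..2 * π, cexp (k * θ * I) = if k = 0 then (2 * π : ℂ) else 0 := by
  split_ifs with hk
  · simp [hk]
  · have hkI : (k : ℂ) * I ≠ 0 := mul_ne_zero (Int.cast_ne_zero.mpr hk) I_ne_zero
    simp_rw [mul_right_comm _ _ I]
    rw [integral_exp_mul_complex hkI]
    have : (k : ℂ) * I * ((2 * π : ℝ) : ℂ) = k * (2 * π * I) := by push_cast; ring
    rw [this, exp_int_mul_two_pi_mul_I]
    simp

theorem ae_exp_ofReal_mul_I_ne (α : ℝ) : ∀ᵐ θ : ℝ, cexp (θ * I) ≠ cexp (α * I) := by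
  refine measure_mono_null (t := range fun k : ℤ => α + k * (2 * π)) ?_
    ((countable_range _).measure_zero _)
  intro θ hθ
  obtain ⟨k, hk⟩ := exp_eq_exp_iff_exists_int.mp (not_not.mp hθ)
  refine ⟨k, ofReal_injective (mul_right_cancel₀ I_ne_zero ?_)⟩
  push_cast
  linear_combination -hk

theorem div_sub_add_sq_div_div_sq_div_sub {K : Type*} [Field K] {w z : K} (hw : w ≠ 0)
    (hwz : w ≠ z) :
    w / (w - z) + z ^ 2 / w / (z ^ 2 / w - z) = 1 := by
  have : w - z ≠ 0 := sub_ne_zero.mpr hwz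
  have : z - w ≠ 0 := sub_ne_zero.mpr hwz.symm
  field_simp
  ring

noncomputable section

namespace HilbertTransform

def away (α ε : ℝ) : Set ℝ := {θ | ε ≤ ‖cexp (θ * I) - cexp (α * I)‖}

def kernel (α θ : ℝ) : ℂ := I * cexp (θ * I) / (cexp (θ * I) - cexp (α * I))

def truncatedHilbert (n : ℤ) (α ε : ℝ) : ℂ :=
  (2 * π * I)⁻¹ * ∫ θ in Icc 0 (2 * π) ∩ away α ε,
    cexp (n * θ * I) * (I * cexp (θ * I)) / (cexp (θ * I) - cexp (α * I))

def modeLimit (n : ℤ) (α : ℝ) : ℂ :=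
  if 0 ≤ n then (1 / 2 : ℂ) * cexp (n * α * I) else -((1 / 2 : ℂ) * cexp (n * α * I))

variable {α ε : ℝ}

theorem isClosed_away (α ε : ℝ) : IsClosed (away α ε) :=
  isClosed_le continuous_const (by fun_prop)

theorem exp_sub_ne_zero_of_mem_away (hε : 0 < ε) {θ : ℝ} (hθ : θ ∈ away α ε) :
    cexp (θ * I) - cexp (α * I) ≠ 0 :=
  norm_pos_iff.mp (hε.trans_le hθ)

theorem integrableOn_Icc_inter_away {f : ℝ → ℂ} (hf : ContinuousOn f (away α ε)) (a b : ℝ) :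
    IntegrableOn f (Icc a b ∩ away α ε) :=
  ContinuousOn.integrableOn_compact (isCompact_Icc.inter_right (isClosed_away α ε))
    (hf.mono inter_subset_right)

theorem continuousOn_mul_kernel (hε : 0 < ε) {f : ℝ → ℂ} (hf : Continuous f) :
    ContinuousOn (fun θ => f θ * (I * cexp (θ * I)) / (cexp (θ * I) - cexp (α * I)))
      (away α ε) :=
  ContinuousOn.div (by fun_prop) (by fun_prop) fun _ => exp_sub_ne_zero_of_mem_away hε

theorem tendsto_integral_inter_away {s : Set ℝ} {f : ℝ → ℂ} (hf : IntegrableOn f s) :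
    Tendsto (fun ε => ∫ θ in s ∩ away α ε, f θ) (𝓝[>] 0) (𝓝 (∫ θ in s, f θ)) :=
  tendsto_setIntegral_inter_setOf_le (by fun_prop)
    ((ae_exp_ofReal_mul_I_ne α).mono fun _ h => norm_pos_iff.mpr (sub_ne_zero.mpr h)) hf

theorem exp_two_mul_sub_mul_I (α θ : ℝ) :
    cexp (((2 * α - θ : ℝ) : ℂ) * I) = cexp (α * I) ^ 2 / cexp (θ * I) := by
  rw [← Complex.exp_nat_mul, ← Complex.exp_sub]
  push_cast
  ring_nf

theorem norm_exp_two_mul_sub_mul_I_sub (α θ : ℝ) :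
    ‖cexp (((2 * α - θ : ℝ) : ℂ) * I) - cexp (α * I)‖ = ‖cexp (θ * I) - cexp (α * I)‖ := by
  have hw := exp_ne_zero (θ * I)
  have : cexp (α * I) ^ 2 / cexp (θ * I) - cexp (α * I)
      = -(cexp (α * I) / cexp (θ * I)) * (cexp (θ * I) - cexp (α * I)) := by
    field_simp
    ring
  rw [exp_two_mul_sub_mul_I, this, norm_mul, norm_neg, norm_div, norm_exp_ofReal_mul_I,
    norm_exp_ofReal_mul_I, div_one, one_mul]

theorem exp_ofReal_add_two_pi_mul_I (θ : ℝ) :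
    cexp (((θ + 2 * π : ℝ) : ℂ) * I) = cexp (θ * I) := by
  rw [ofReal_add, add_mul, ofReal_mul, ofReal_ofNat, exp_periodic]

theorem reflect_mem_away_iff {θ : ℝ} : 2 * α - θ ∈ away α ε ↔ θ ∈ away α ε := by
  simp only [away, mem_ofPred_eq, norm_exp_two_mul_sub_mul_I_sub]

theorem continuousOn_kernel (hε : 0 < ε) : ContinuousOn (kernel α) (away α ε) :=
  ContinuousOn.div (by fun_prop) (by fun_prop) fun _ => exp_sub_ne_zero_of_mem_away hε

theorem kernel_add_kernel_reflect (hε : 0 < ε) {θ : ℝ} (hθ : θ ∈ away α ε) :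
    kernel α θ + kernel α (2 * α - θ) = I := by
  have hwz := sub_ne_zero.mp (exp_sub_ne_zero_of_mem_away hε hθ)
  simp only [kernel, exp_two_mul_sub_mul_I, mul_div_assoc, ← mul_add,
    div_sub_add_sq_div_div_sq_div_sub (Complex.exp_ne_zero _) hwz, mul_one]

theorem indicator_kernel_add_reflect (hε : 0 < ε) (θ : ℝ) :
    (away α ε).indicator (kernel α) θ + (away α ε).indicator (kernel α) (2 * α - θ)
      = I * (away α ε).indicator (fun _ => 1) θ := by
  by_cases hθ : θ ∈ away α ε
  · rw [indicator_of_mem hθ, indicator_of_mem (reflect_mem_away_iff.mpr hθ),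
      indicator_of_mem hθ, mul_one, kernel_add_kernel_reflect hε hθ]
  · rw [indicator_of_notMem hθ, indicator_of_notMem (mt reflect_mem_away_iff.mp hθ),
      indicator_of_notMem hθ, add_zero, mul_zero]

theorem intervalIntegrable_indicator_away {f : ℝ → ℂ} (hf : ContinuousOn f (away α ε))
    {a b : ℝ} (hab : a ≤ b) : IntervalIntegrable ((away α ε).indicator f) volume a b := by
  rw [intervalIntegrable_iff_integrableOn_Ioc_of_le hab,
    integrableOn_indicator_iff (isClosed_away α ε).measurableSet, inter_comm]
  exact (integrableOn_Icc_inter_away hf a b).mono_set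
    (inter_subset_inter_left _ Ioc_subset_Icc_self)

theorem integral_kernel (hε : 0 < ε) :
    ∫ θ in Icc 0 (2 * π) ∩ away α ε, kernel α θ
      = I / 2 * ∫ _ in Ioc (α - π) (α + π) ∩ away α ε, (1 : ℂ) := by
  set F := (away α ε).indicator (kernel α)
  have hmeas := (isClosed_away α ε).measurableSet
  have hle : α - π ≤ α + π := by linarith [pi_pos]
  have hF : IntervalIntegrable F volume (α - π) (α + π) :=
    intervalIntegrable_indicator_away (continuousOn_kernel hε) hle
  have h1 : IntervalIntegrable ((away α ε).indicator fun _ => (1 : ℂ)) volume (α - π) (α + π) :=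
    intervalIntegrable_indicator_away continuousOn_const hle
  have hper : F.Periodic (2 * π) := fun _ => by
    simp only [F, indicator_apply, away, kernel, mem_ofPred_eq, exp_ofReal_add_two_pi_mul_I]
  have hsymm : ∫ θ in α - π..α + π, F θ
      = I * (∫ θ in α - π..α + π, (away α ε).indicator (fun _ => 1) θ)
        - ∫ θ in α - π..α + π, F θ :=
    calc ∫ θ in α - π..α + π, F θ = ∫ θ in α - π..α + π, F (2 * α - θ) := by
          rw [intervalIntegral.integral_comp_sub_left]; ring_nf
      _ = ∫ θ in α - π..α + π, (I * (away α ε).indicator (fun _ => 1) θ - F θ) := by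
          refine intervalIntegral.integral_congr fun θ _ => ?_
          linear_combination indicator_kernel_add_reflect hε θ
      _ = _ := by rw [intervalIntegral.integral_sub (h1.const_mul I) hF,
          intervalIntegral.integral_const_mul]
  calc ∫ θ in Icc 0 (2 * π) ∩ away α ε, kernel α θ = ∫ θ in 0..2 * π, F θ := by
        rw [← setIntegral_indicator hmeas, integral_Icc_eq_integral_Ioc,
          intervalIntegral.integral_of_le (by positivity)]
    _ = ∫ θ in α - π..α + π, F θ := by
        simpa [show α - π + 2 * π = α + π by ring] using hper.intervalIntegral_add_eq 0 (α - π)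
    _ = I / 2 * ∫ θ in α - π..α + π, (away α ε).indicator (fun _ => 1) θ := by
        linear_combination hsymm / 2
    _ = _ := by rw [intervalIntegral.integral_of_le hle, setIntegral_indicator hmeas]

theorem tendsto_truncatedHilbert_zero (α : ℝ) :
    Tendsto (truncatedHilbert 0 α) (𝓝[>] 0) (𝓝 (1 / 2)) := by
  have hlim := (tendsto_integral_inter_away (α := α) (f := fun _ => (1 : ℂ))
    (s := Ioc (α - π) (α + π)) (integrableOn_const measure_Ioc_lt_top.ne)).const_mul
    ((2 * π * I)⁻¹ * (I / 2))
  have hval : (2 * π * I)⁻¹ * (I / 2) * ∫ _ in Ioc (α - π) (α + π), (1 : ℂ) = 1 / 2 := by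
    have : (α + π) - (α - π) = 2 * π := by ring
    simp [this, two_pi_pos.le]
    field_simp
    rw [I_sq]
    ring
  rw [hval] at hlim
  refine hlim.congr' ?_
  filter_upwards [self_mem_nhdsWithin] with ε (hε : 0 < ε)
  simp only [truncatedHilbert, Int.cast_zero, zero_mul, Complex.exp_zero, one_mul]
  change _ = (2 * π * I)⁻¹ * ∫ θ in Icc 0 (2 * π) ∩ away α ε, kernel α θ
  rw [integral_kernel hε]
  ring

theorem truncatedHilbert_add_one (n : ℤ) (hε : 0 < ε) :
    truncatedHilbert (n + 1) α ε = cexp (α * I) * truncatedHilbert n α ε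
      + (2 * π : ℂ)⁻¹ * ∫ θ in Icc 0 (2 * π) ∩ away α ε, cexp ((n + 1 : ℤ) * θ * I) := by
  have hmeas : MeasurableSet (Icc 0 (2 * π) ∩ away α ε) :=
    measurableSet_Icc.inter (isClosed_away α ε).measurableSet
  have hstep : EqOn
      (fun θ : ℝ => cexp ((n + 1 : ℤ) * θ * I) * (I * cexp (θ * I))
        / (cexp (θ * I) - cexp (α * I)))
      (fun θ : ℝ => cexp (α * I) * (cexp (n * θ * I) * (I * cexp (θ * I))
        / (cexp (θ * I) - cexp (α * I))) + I * cexp ((n + 1 : ℤ) * θ * I))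
      (Icc 0 (2 * π) ∩ away α ε) := fun θ hθ => by
    have hsub := exp_sub_ne_zero_of_mem_away hε hθ.2
    have hsucc : cexp (((n + 1 : ℤ) : ℂ) * θ * I) = cexp (n * θ * I) * cexp (θ * I) := by
      rw [← Complex.exp_add]; push_cast; ring_nf
    beta_reduce
    rw [hsucc, div_eq_iff hsub, add_mul, mul_assoc (cexp (α * I)), div_mul_cancel₀ _ hsub]
    ring
  unfold truncatedHilbert
  rw [setIntegral_congr_fun hmeas hstep, integral_add, integral_const_mul, integral_const_mul]
  · field_simp
  · exact (integrableOn_Icc_inter_away (continuousOn_mul_kernel hε (by fun_prop)) 0 _).const_mul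
      _
  · exact ((Complex.continuous_exp.comp (by fun_prop)).integrableOn_Icc.mono_set
      inter_subset_left).const_mul _

theorem tendsto_integral_exp_int_mul_ofReal_mul_I (α : ℝ) (k : ℤ) :
    Tendsto (fun ε => ∫ θ in Icc 0 (2 * π) ∩ away α ε, cexp (k * θ * I)) (𝓝[>] 0)
      (𝓝 (if k = 0 then (2 * π : ℂ) else 0)) := by
  rw [← integral_exp_int_mul_ofReal_mul_I, intervalIntegral.integral_of_le (by positivity),
    ← integral_Icc_eq_integral_Ioc]
  exact tendsto_integral_inter_away (Complex.continuous_exp.comp (by fun_prop)).integrableOn_Icc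

theorem modeLimit_add_one (n : ℤ) (α : ℝ) :
    modeLimit (n + 1) α = cexp (α * I) * modeLimit n α + if n + 1 = 0 then 1 else 0 := by
  have hexp : cexp (((n + 1 : ℤ) : ℂ) * α * I) = cexp (α * I) * cexp (n * α * I) := by
    rw [← Complex.exp_add]; push_cast; ring_nf
  unfold modeLimit
  rw [hexp]
  rcases lt_trichotomy n (-1) with hn | rfl | hn
  · simp [show ¬ 0 ≤ n + 1 by omega, show ¬ 0 ≤ n by omega, show n + 1 ≠ 0 by omega]
    ring
  · have : cexp (α * I) * cexp (-(α * I)) = 1 := by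
      rw [← Complex.exp_add, add_neg_cancel, Complex.exp_zero]
    simp
    linear_combination this
  · simp [show 0 ≤ n + 1 by omega, show 0 ≤ n by omega, show n + 1 ≠ 0 by omega]
    ring

theorem tendsto_truncatedHilbert_add_one_iff (n : ℤ) (α : ℝ) :
    Tendsto (truncatedHilbert (n + 1) α) (𝓝[>] 0) (𝓝 (modeLimit (n + 1) α)) ↔
      Tendsto (truncatedHilbert n α) (𝓝[>] 0) (𝓝 (modeLimit n α)) := by
  have hz : cexp (α * I) ≠ 0 := exp_ne_zero _
  set c := fun ε => (2 * π : ℂ)⁻¹ * ∫ θ in Icc 0 (2 * π) ∩ away α ε, cexp ((n + 1 : ℤ) * θ * I)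
  have hc : Tendsto c (𝓝[>] 0) (𝓝 (if n + 1 = 0 then 1 else 0)) := by
    convert (tendsto_integral_exp_int_mul_ofReal_mul_I α (n + 1)).const_mul (2 * π : ℂ)⁻¹ using 2
    split_ifs
    · field_simp
    · rw [mul_zero]
  have hrec : truncatedHilbert (n + 1) α =ᶠ[𝓝[>] 0]
      fun ε => cexp (α * I) * truncatedHilbert n α ε + c ε :=
    eventually_mem_nhdsWithin.mono fun _ hε => truncatedHilbert_add_one n hε
  rw [tendsto_congr' hrec, modeLimit_add_one]
  refine ⟨fun h => ?_, fun h => (h.const_mul _).add hc⟩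
  simpa only [add_sub_cancel_right, inv_mul_cancel_left₀ hz] using
    (h.sub hc).const_mul (cexp (α * I))⁻¹

theorem tendsto_truncatedHilbert (n : ℤ) (α : ℝ) :
    Tendsto (truncatedHilbert n α) (𝓝[>] 0) (𝓝 (modeLimit n α)) := by
  induction n using Int.induction_on with
  | zero => simpa [modeLimit] using tendsto_truncatedHilbert_zero α
  | succ i ih => exact (tendsto_truncatedHilbert_add_one_iff _ α).mpr ih
  | pred i ih => exact (tendsto_truncatedHilbert_add_one_iff _ α).mp (by simpa using ih)

end HilbertTransform

end

theorem hilbert_transform_on_fourier_modes (n : ℤ) (α : ℝ) :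
    Tendsto
      (fun ε : ℝ => (2 * π * Complex.I)⁻¹ *
        ∫ θ in {θ : ℝ | θ ∈ Icc 0 (2 * π) ∧
            ε ≤ ‖Complex.exp (θ * Complex.I) - Complex.exp (α * Complex.I)‖},
          Complex.exp ((n : ℂ) * θ * Complex.I) * (Complex.I * Complex.exp (θ * Complex.I)) /
            (Complex.exp (θ * Complex.I) - Complex.exp (α * Complex.I)))
      (nhdsWithin 0 (Ioi 0))
      (nhds (if 0 ≤ n then (1 / 2 : ℂ) * Complex.exp ((n : ℂ) * α * Complex.I)
        else -((1 / 2 : ℂ) * Complex.exp ((n : ℂ) * α * Complex.I)))) :=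
  HilbertTransform.tendsto_truncatedHilbert n α
end
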